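/- Fix c with 0 < c < 1, and suppose that for every group a ∈ G the conditional law of p(X) given g(X) = a has positive density on [0,1], and that μ(Y = 0, g(X) = a) > 0 for every a ∈ G. Then there exist constants t_a ∈ [0,1] for a ∈ G such that the decision rule d*(x) = 1 if p(x) ≥ t_{g(x)} and 0 otherwise satisfies predictive equality, and u(d,c) ≤ u(d*,c) for every decision rule d satisfying predictive equality. -/

import Mathlib

/-!
Within one group, a threshold rule `D = 1{p ≥ t}` on the risk score is a Neyman–Pearson test:
for any rule `d` with the same false-positive mass `∫ (1 - p) d`, pointwise
`(p - c)(D - d) ≥ κ (1 - p)(D - d)` with `κ = (t - c)/(1 - t)`, so `D` has at least the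
utility of `d`. Since the conditional law of `p(X)` in each group has no atoms, a group's
false-positive rate is continuous in its threshold and falls from 1 at `t = 0` to 0 at `t = 1`,
so the common false-positive rate of a rule with predictive equality is met by a vector of group
thresholds. The threshold vectors with equal group false-positive rates form a compact set on
which the utility is continuous; a maximiser there is the rule `d*`.
-/

open MeasureTheory ProbabilityTheory Set

noncomputable section

/-- A probability law on ℝ has positive density on `[0,1]`. -/
def PosDensity01 (ν : Measure ℝ) : Prop :=
  ∃ φ : ℝ → ENNReal,
    ν = volume.withDensity φ ∧
    (∀ᵐ x ∂(volume.restrict (Icc (0:ℝ) 1)), 0 < φ x) ∧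
    (∀ᵐ x ∂(volume : Measure ℝ), x ∉ Icc (0:ℝ) 1 → φ x = 0)

/-- A decision rule `d` satisfies predictive equality:
`E[d(X) | Y = 0, g(X) = a] = E[d(X) | Y = 0]` for every group `a`. -/
def PredEq {Ω 𝒳 G : Type*} [MeasurableSpace Ω]
    (μ : Measure Ω) (X : Ω → 𝒳) (Y : Ω → ℝ) (g : 𝒳 → G) (d : 𝒳 → ℝ) : Prop :=
  ∀ a : G,
    (∫ ω in {ω | Y ω = 0 ∧ g (X ω) = a}, d (X ω) ∂μ)
        / (μ {ω | Y ω = 0 ∧ g (X ω) = a}).toReal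
      = (∫ ω in {ω | Y ω = 0}, d (X ω) ∂μ) / (μ {ω | Y ω = 0}).toReal

open Filter

section General

variable {Ω : Type*} [MeasurableSpace Ω] {ν : Measure Ω}

lemma ite_le_mem_Icc (s x : ℝ) : (if s ≤ x then 1 else 0 : ℝ) ∈ Icc (0:ℝ) 1 := by
  split_ifs <;> simp

lemma MeasureTheory.Integrable.mul_of_mem_Icc {f δ : Ω → ℝ} (hf : Integrable f ν)
    (hδ : Measurable δ) (hδ01 : ∀ ω, δ ω ∈ Icc (0:ℝ) 1) : Integrable (fun ω => f ω * δ ω) ν :=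
  hf.mul_bdd hδ.aestronglyMeasurable (c := 1) <| ae_of_all _ fun ω => by
    rw [Real.norm_eq_abs, abs_le]
    exact ⟨by linarith [(hδ01 ω).1], (hδ01 ω).2⟩

lemma integral_eq_sum_setIntegral_fiber {ι : Type*} [Fintype ι] [MeasurableSpace ι]
    [MeasurableSingletonClass ι] {k : Ω → ι} (hk : Measurable k) {f : Ω → ℝ}
    (hf : Integrable f ν) : ∫ ω, f ω ∂ν = ∑ i, ∫ ω in {ω | k ω = i}, f ω ∂ν := by
  have hcover : (⋃ i, {ω | k ω = i}) = univ := iUnion_eq_univ_iff.2 fun ω => ⟨k ω, rfl⟩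
  rw [← setIntegral_univ, ← hcover]
  exact integral_iUnion_fintype (fun i => hk (measurableSet_singleton i))
    (fun i j hij => disjoint_left.2 fun ω hi hj => hij (hi.symm.trans hj))
    fun i => hf.integrableOn

lemma continuous_integral_mul_ite_le {ι : Type*} [MeasurableSpace ι] [Countable ι]
    [MeasurableSingletonClass ι] {h q : Ω → ℝ} {k : Ω → ι} (hh : Integrable h ν)
    (hq : Measurable q) (hk : Measurable k) (hatom : ∀ t : ι → ℝ, ∀ᵐ ω ∂ν, q ω ≠ t (k ω)) :
    Continuous fun t : ι → ℝ => ∫ ω, h ω * (if t (k ω) ≤ q ω then 1 else 0) ∂ν := by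
  refine continuous_iff_continuousAt.2 fun t₀ => continuousAt_of_dominated
    (bound := fun ω => ‖h ω‖) ?_ ?_ hh.norm ?_
  · refine Eventually.of_forall fun t => hh.aestronglyMeasurable.mul ?_
    exact (Measurable.ite (measurableSet_le ((measurable_of_countable t).comp hk) hq)
      measurable_const measurable_const).aestronglyMeasurable
  · refine Eventually.of_forall fun t => ae_of_all _ fun ω => ?_
    split_ifs <;> simp
  · filter_upwards [hatom t₀] with ω hω
    refine continuousAt_const.mul ?_
    have hev := (continuous_apply (k ω)).continuousAt (x := t₀)
    rcases hω.lt_or_gt with hlt | hgt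
    · refine EventuallyEq.continuousAt (y := 0) ?_
      filter_upwards [hev.eventually (lt_mem_nhds hlt)] with t ht
      exact if_neg (not_le.2 ht)
    · refine EventuallyEq.continuousAt (y := 1) ?_
      filter_upwards [hev.eventually (gt_mem_nhds hgt)] with t ht
      exact if_pos ht.le

lemma neymanPearson_pointwise {t c q δ : ℝ} (ht : t < 1) (hc : c < 1) (hδ01 : δ ∈ Icc (0:ℝ) 1) :
    (t - c) / (1 - t) * ((1 - q) * (if t ≤ q then 1 else 0) - (1 - q) * δ)
      ≤ (q - c) * (if t ≤ q then 1 else 0) - (q - c) * δ := by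
  obtain ⟨hδ0, hδ1⟩ := hδ01
  rw [div_mul_eq_mul_div, div_le_iff₀ (by linarith)]
  split_ifs with hle
  · nlinarith [mul_nonneg (sub_nonneg.2 hle) (sub_nonneg.2 hc.le)]
  · nlinarith [mul_nonneg (sub_nonneg.2 (not_le.1 hle).le) (sub_nonneg.2 hc.le)]

lemma integral_mul_le_integral_mul_ite_le [IsFiniteMeasure ν] {q δ : Ω → ℝ}
    (hq : Measurable q) (hδ : Measurable δ) (hq01 : ∀ ω, q ω ∈ Icc (0:ℝ) 1)
    (hδ01 : ∀ ω, δ ω ∈ Icc (0:ℝ) 1) {t c : ℝ} (ht : t ≤ 1) (hc : c < 1)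
    (hfp : ∫ ω, (1 - q ω) * δ ω ∂ν = ∫ ω, (1 - q ω) * (if t ≤ q ω then 1 else 0) ∂ν) :
    ∫ ω, (q ω - c) * δ ω ∂ν ≤ ∫ ω, (q ω - c) * (if t ≤ q ω then 1 else 0) ∂ν := by
  set D : Ω → ℝ := fun ω => if t ≤ q ω then 1 else 0
  have hD : Measurable D :=
    Measurable.ite (measurableSet_le measurable_const hq) measurable_const measurable_const
  have hD01 : ∀ ω, D ω ∈ Icc (0:ℝ) 1 := fun ω => ite_le_mem_Icc _ _
  have hqi : Integrable q ν := .of_mem_Icc 0 1 hq.aemeasurable (ae_of_all _ hq01)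
  have hpos : Integrable (fun ω => q ω - c) ν := hqi.sub (integrable_const c)
  have hneg : Integrable (fun ω => 1 - q ω) ν := (integrable_const 1).sub hqi
  have hposD := hpos.mul_of_mem_Icc hD hD01
  have hposδ := hpos.mul_of_mem_Icc hδ hδ01
  have hnegD := hneg.mul_of_mem_Icc hD hD01
  have hnegδ := hneg.mul_of_mem_Icc hδ hδ01
  rcases ht.lt_or_eq with ht | rfl
  · have key : (t - c) / (1 - t) * ((∫ ω, (1 - q ω) * D ω ∂ν) - ∫ ω, (1 - q ω) * δ ω ∂ν)
        ≤ (∫ ω, (q ω - c) * D ω ∂ν) - ∫ ω, (q ω - c) * δ ω ∂ν := by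
      rw [← integral_sub hnegD hnegδ, ← integral_sub hposD hposδ, ← integral_const_mul]
      exact integral_mono ((hnegD.sub hnegδ).const_mul _) (hposD.sub hposδ)
        fun ω => neymanPearson_pointwise ht hc (hδ01 ω)
    rwa [← hfp, sub_self, mul_zero, sub_nonneg] at key
  · -- at `t = 1` the constraint forces `δ = 0` almost everywhere on `{q < 1}`
    have hD0 : ∀ ω, (1 - q ω) * D ω = 0 := fun ω => by
      by_cases h : 1 ≤ q ω
      · rw [le_antisymm (hq01 ω).2 h, sub_self, zero_mul]
      · simp [D, h]
    rw [show ∫ ω, (1 - q ω) * D ω ∂ν = 0 by simp [hD0]] at hfp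
    have hzero := (integral_eq_zero_iff_of_nonneg
      (fun ω => mul_nonneg (sub_nonneg.2 (hq01 ω).2) (hδ01 ω).1) hnegδ).1 hfp
    refine integral_mono_ae hposδ hposD ?_
    filter_upwards [hzero] with ω hω
    obtain ⟨hδ0, hδ1⟩ := hδ01 ω
    by_cases h : 1 ≤ q ω
    · simp only [if_pos h]
      nlinarith
    · have hδz : δ ω = 0 := (mul_eq_zero.1 hω).resolve_left (by linarith)
      simp [h, hδz]

end General

lemma PosDensity01.absolutelyContinuous {ν : Measure ℝ} (h : PosDensity01 ν) : ν ≪ volume := by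
  obtain ⟨φ, rfl, -, -⟩ := h
  exact withDensity_absolutelyContinuous _ _

section Fairness

variable {Ω 𝒳 G : Type*} [MeasurableSpace Ω] {μ : Measure Ω} {X : Ω → 𝒳} {Y : Ω → ℝ}
  {p : 𝒳 → ℝ} {g : 𝒳 → G}

/-- `p (X)` is a version of `E[Y | X]`. -/
def IsRiskScore [MeasurableSpace 𝒳] (μ : Measure Ω) (X : Ω → 𝒳) (Y : Ω → ℝ) (p : 𝒳 → ℝ) :
    Prop :=
  ∀ f : 𝒳 → ℝ, Measurable f → (∃ C, ∀ x, |f x| ≤ C) →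
    ∫ ω, Y ω * f (X ω) ∂μ = ∫ ω, p (X ω) * f (X ω) ∂μ

def NoGroupAtoms (μ : Measure Ω) (X : Ω → 𝒳) (p : 𝒳 → ℝ) (g : 𝒳 → G) : Prop :=
  ∀ t : G → ℝ, ∀ᵐ ω ∂μ, p (X ω) ≠ t (g (X ω))

def thresholdRule (p : 𝒳 → ℝ) (g : 𝒳 → G) (t : G → ℝ) (x : 𝒳) : ℝ :=
  if t (g x) ≤ p x then 1 else 0

def utility (μ : Measure Ω) (X : Ω → 𝒳) (Y : Ω → ℝ) (c : ℝ) (d : 𝒳 → ℝ) : ℝ :=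
  (∫ ω, Y ω * d (X ω) ∂μ) - c * ∫ ω, d (X ω) ∂μ

def groupFPR (μ : Measure Ω) (X : Ω → 𝒳) (Y : Ω → ℝ) (g : 𝒳 → G) (d : 𝒳 → ℝ) (a : G) : ℝ :=
  (∫ ω in {ω | Y ω = 0 ∧ g (X ω) = a}, d (X ω) ∂μ) / (μ {ω | Y ω = 0 ∧ g (X ω) = a}).toReal

def equalFPRThresholds (μ : Measure Ω) (X : Ω → 𝒳) (Y : Ω → ℝ) (p : 𝒳 → ℝ) (g : 𝒳 → G) :
    Set (G → ℝ) :=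
  {t | (∀ a, t a ∈ Icc (0:ℝ) 1) ∧
    ∀ a b, groupFPR μ X Y g (thresholdRule p g t) a = groupFPR μ X Y g (thresholdRule p g t) b}

lemma thresholdRule_mem_Icc (t : G → ℝ) (x : 𝒳) : thresholdRule p g t x ∈ Icc (0:ℝ) 1 :=
  ite_le_mem_Icc _ _

lemma thresholdRule_of_eq {t : G → ℝ} {x : 𝒳} {a : G} (hx : g x = a) :
    thresholdRule p g t x = thresholdRule p g (fun _ => t a) x := by
  simp [thresholdRule, hx]

lemma integrable_comp_of_mem_Icc [MeasurableSpace 𝒳] [IsFiniteMeasure μ] (hX : Measurable X)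
    {f : 𝒳 → ℝ} (hf : Measurable f) (hf01 : ∀ x, f x ∈ Icc (0:ℝ) 1) :
    Integrable (fun ω => f (X ω)) μ :=
  .of_mem_Icc 0 1 (hf.fun_comp hX).aemeasurable (ae_of_all _ fun ω => hf01 (X ω))

lemma utility_eq_integral [MeasurableSpace 𝒳] [IsFiniteMeasure μ] (hX : Measurable X)
    (hp : Measurable p) (hp01 : ∀ x, p x ∈ Icc (0:ℝ) 1) (hrisk : IsRiskScore μ X Y p)
    {d : 𝒳 → ℝ} (hd : Measurable d) (hd01 : ∀ x, d x ∈ Icc (0:ℝ) 1) (c : ℝ) :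
    utility μ X Y c d = ∫ ω, (p (X ω) - c) * d (X ω) ∂μ := by
  have hpd := (integrable_comp_of_mem_Icc (μ := μ) hX hp hp01).mul_of_mem_Icc (hd.fun_comp hX)
    fun ω => hd01 _
  have hcd := (integrable_comp_of_mem_Icc (μ := μ) hX hd hd01).const_mul c
  rw [utility, hrisk d hd ⟨1, fun x => abs_le.2 ⟨by linarith [(hd01 x).1], (hd01 x).2⟩⟩,
    ← integral_const_mul, ← integral_sub hpd hcd]
  simp only [sub_mul]

lemma groupFPR_mem_Icc [MeasurableSpace 𝒳] [IsFiniteMeasure μ] (hX : Measurable X)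
    {d : 𝒳 → ℝ} (hd : Measurable d) (hd01 : ∀ x, d x ∈ Icc (0:ℝ) 1) (a : G) :
    groupFPR μ X Y g d a ∈ Icc (0:ℝ) 1 := by
  refine ⟨div_nonneg (integral_nonneg fun ω => (hd01 _).1) ENNReal.toReal_nonneg,
    div_le_one_of_le₀ ?_ ENNReal.toReal_nonneg⟩
  calc ∫ ω in {ω | Y ω = 0 ∧ g (X ω) = a}, d (X ω) ∂μ
      ≤ ∫ ω in {ω | Y ω = 0 ∧ g (X ω) = a}, (1:ℝ) ∂μ :=
        setIntegral_mono (integrable_comp_of_mem_Icc hX hd hd01).integrableOn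
          (integrable_const 1).integrableOn fun ω => (hd01 _).2
    _ = (μ {ω | Y ω = 0 ∧ g (X ω) = a}).toReal := by simp [measureReal_def]

lemma groupFPR_thresholdRule_zero [IsFiniteMeasure μ] (hp01 : ∀ x, p x ∈ Icc (0:ℝ) 1)
    (hY0pos : ∀ a : G, 0 < μ {ω | Y ω = 0 ∧ g (X ω) = a}) (a : G) :
    groupFPR μ X Y g (thresholdRule p g fun _ => 0) a = 1 := by
  have h1 : ∀ x, thresholdRule p g (fun _ => 0) x = 1 := fun x => if_pos (hp01 x).1
  simp only [groupFPR, h1, setIntegral_const, smul_eq_mul, mul_one, measureReal_def]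
  exact div_self (ENNReal.toReal_ne_zero.2 ⟨(hY0pos a).ne', measure_ne_top μ _⟩)

lemma groupFPR_thresholdRule_one (hp01 : ∀ x, p x ∈ Icc (0:ℝ) 1)
    (hatom : NoGroupAtoms μ X p g) (a : G) :
    groupFPR μ X Y g (thresholdRule p g fun _ => 1) a = 0 := by
  rw [groupFPR, integral_eq_zero_of_ae, zero_div]
  filter_upwards [ae_restrict_of_ae (hatom fun _ => 1)] with ω hω
  exact if_neg (not_le.2 (lt_of_le_of_ne (hp01 _).2 hω))

variable [MeasurableSpace 𝒳] [MeasurableSpace G] [MeasurableSingletonClass G]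

lemma measurable_thresholdRule [Countable G] (hp : Measurable p) (hg : Measurable g)
    (t : G → ℝ) : Measurable (thresholdRule p g t) :=
  Measurable.ite (measurableSet_le ((measurable_of_countable t).comp hg) hp)
    measurable_const measurable_const

lemma measurableSet_group (hX : Measurable X) (hg : Measurable g) (a : G) :
    MeasurableSet {ω | g (X ω) = a} :=
  hg.comp hX (measurableSet_singleton a)

lemma measurableSet_negative_group (hX : Measurable X) (hY : Measurable Y) (hg : Measurable g)
    (a : G) : MeasurableSet {ω | Y ω = 0 ∧ g (X ω) = a} :=
  (hY (measurableSet_singleton 0)).inter (measurableSet_group hX hg a)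

lemma noGroupAtoms_of_posDensity01 [Countable G] [IsFiniteMeasure μ] (hX : Measurable X)
    (hp : Measurable p) (hg : Measurable g)
    (hdens : ∀ a : G, PosDensity01 (Measure.map (fun ω => p (X ω)) (cond μ {ω | g (X ω) = a}))) :
    NoGroupAtoms μ X p g := by
  intro t
  have hnull : ∀ a, μ ({ω | g (X ω) = a} ∩ (fun ω => p (X ω)) ⁻¹' {t a}) = 0 := by
    intro a
    have h := (hdens a).absolutelyContinuous (Real.volume_singleton (a := t a))
    rw [Measure.map_apply (hp.fun_comp hX) (measurableSet_singleton _),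
      cond_apply (measurableSet_group hX hg a)] at h
    exact (mul_eq_zero.1 h).resolve_left (ENNReal.inv_ne_zero.2 (measure_ne_top μ _))
  rw [ae_iff]
  refine measure_mono_null (fun ω hω => ?_) (measure_iUnion_null hnull)
  exact mem_iUnion.2 ⟨g (X ω), rfl, not_not.1 hω⟩

lemma setIntegral_negative_group [IsFiniteMeasure μ] (hX : Measurable X) (hY : Measurable Y)
    (hY01 : ∀ ω, Y ω = 0 ∨ Y ω = 1) (hp : Measurable p) (hp01 : ∀ x, p x ∈ Icc (0:ℝ) 1)
    (hrisk : IsRiskScore μ X Y p) (hg : Measurable g) {d : 𝒳 → ℝ} (hd : Measurable d)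
    (hd01 : ∀ x, d x ∈ Icc (0:ℝ) 1) (a : G) :
    ∫ ω in {ω | Y ω = 0 ∧ g (X ω) = a}, d (X ω) ∂μ
      = ∫ ω in {ω | g (X ω) = a}, (1 - p (X ω)) * d (X ω) ∂μ := by
  set f := {x | g x = a}.indicator d
  have hf : Measurable f := hd.indicator (hg (measurableSet_singleton a))
  have hf01 : ∀ x, f x ∈ Icc (0:ℝ) 1 := fun x => by
    by_cases hx : g x = a <;> simp [f, hx, hd01 x]
  have hfX := integrable_comp_of_mem_Icc (μ := μ) hX hf hf01
  have hYf : Integrable (fun ω => Y ω * f (X ω)) μ :=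
    (Integrable.of_mem_Icc 0 1 hY.aemeasurable (ae_of_all _ fun ω => by
      rcases hY01 ω with h | h <;> simp [h])).mul_of_mem_Icc (hf.fun_comp hX) fun ω => hf01 _
  have hpf := (integrable_comp_of_mem_Icc (μ := μ) hX hp hp01).mul_of_mem_Icc (hf.fun_comp hX)
    fun ω => hf01 _
  calc ∫ ω in {ω | Y ω = 0 ∧ g (X ω) = a}, d (X ω) ∂μ = ∫ ω, (1 - Y ω) * f (X ω) ∂μ := by
        rw [← integral_indicator (measurableSet_negative_group hX hY hg a)]
        refine integral_congr_ae (ae_of_all _ fun ω => ?_)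
        rcases hY01 ω with h | h <;> by_cases hga : g (X ω) = a <;> simp [f, indicator, h, hga]
    _ = ∫ ω, (1 - p (X ω)) * f (X ω) ∂μ := by
        simp only [sub_mul, one_mul]
        rw [integral_sub hfX hYf, integral_sub hfX hpf,
          hrisk f hf ⟨1, fun x => abs_le.2 ⟨by linarith [(hf01 x).1], (hf01 x).2⟩⟩]
    _ = ∫ ω in {ω | g (X ω) = a}, (1 - p (X ω)) * d (X ω) ∂μ := by
        rw [← integral_indicator (measurableSet_group hX hg a)]
        refine integral_congr_ae (ae_of_all _ fun ω => ?_)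
        by_cases hga : g (X ω) = a <;> simp [f, indicator, hga]

lemma predEq_of_groupFPR_eq [Fintype G] [IsFiniteMeasure μ] (hX : Measurable X)
    (hg : Measurable g) (hY0pos : ∀ a : G, 0 < μ {ω | Y ω = 0 ∧ g (X ω) = a}) {d : 𝒳 → ℝ}
    (hd : Measurable d) (hd01 : ∀ x, d x ∈ Icc (0:ℝ) 1)
    (h : ∀ a b, groupFPR μ X Y g d a = groupFPR μ X Y g d b) : PredEq μ X Y g d := by
  intro a
  have hrestrict : ∀ b, (μ.restrict {ω | Y ω = 0}).restrict {ω | g (X ω) = b}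
      = μ.restrict {ω | Y ω = 0 ∧ g (X ω) = b} := fun b => by
    rw [Measure.restrict_restrict (measurableSet_group hX hg b), inter_comm]
    rfl
  have hsplit : ∀ f : Ω → ℝ, Integrable f μ → ∫ ω in {ω | Y ω = 0}, f ω ∂μ
      = ∑ b, ∫ ω in {ω | Y ω = 0 ∧ g (X ω) = b}, f ω ∂μ := fun f hf => by
    rw [integral_eq_sum_setIntegral_fiber (k := fun ω => g (X ω)) (hg.comp hX) hf.restrict]
    simp only [hrestrict]
  have hnum : ∀ b, ∫ ω in {ω | Y ω = 0 ∧ g (X ω) = b}, d (X ω) ∂μ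
      = groupFPR μ X Y g d a * (μ {ω | Y ω = 0 ∧ g (X ω) = b}).toReal := fun b => by
    rw [← h b a, groupFPR, div_mul_cancel₀ _ (ENNReal.toReal_ne_zero.2
      ⟨(hY0pos b).ne', measure_ne_top μ _⟩)]
  have hmass : (μ {ω | Y ω = 0}).toReal = ∑ b, (μ {ω | Y ω = 0 ∧ g (X ω) = b}).toReal := by
    simpa [measureReal_def] using hsplit (fun _ => 1) (integrable_const 1)
  have hmass_pos : 0 < μ {ω | Y ω = 0} := (hY0pos a).trans_le (measure_mono fun ω hω => hω.1)
  rw [hsplit _ (integrable_comp_of_mem_Icc hX hd hd01), Finset.sum_congr rfl fun b _ => hnum b,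
    ← Finset.mul_sum, ← hmass, mul_div_cancel_right₀ _ (ENNReal.toReal_ne_zero.2
      ⟨hmass_pos.ne', measure_ne_top μ _⟩)]
  rfl

lemma continuous_groupFPR_thresholdRule [Countable G] [IsFiniteMeasure μ] (hX : Measurable X)
    (hp : Measurable p) (hg : Measurable g) (hatom : NoGroupAtoms μ X p g) (a : G) :
    Continuous fun t => groupFPR μ X Y g (thresholdRule p g t) a := by
  have h := continuous_integral_mul_ite_le (ν := μ.restrict {ω | Y ω = 0 ∧ g (X ω) = a})
    (integrable_const (1:ℝ)) (hp.fun_comp hX) (hg.fun_comp hX) fun t => ae_restrict_of_ae (hatom t)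
  simp only [one_mul] at h
  exact h.div_const _

lemma groupFPR_thresholdRule_eq_const (hX : Measurable X) (hY : Measurable Y) (hg : Measurable g)
    (t : G → ℝ) (a : G) : groupFPR μ X Y g (thresholdRule p g t) a
      = groupFPR μ X Y g (thresholdRule p g fun _ => t a) a := by
  rw [groupFPR, setIntegral_congr_fun (measurableSet_negative_group hX hY hg a)
    fun ω hω => thresholdRule_of_eq hω.2]
  rfl

lemma exists_thresholdRule_groupFPR_eq [Countable G] [IsFiniteMeasure μ] (hX : Measurable X)
    (hY : Measurable Y) (hp : Measurable p) (hp01 : ∀ x, p x ∈ Icc (0:ℝ) 1) (hg : Measurable g)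
    (hatom : NoGroupAtoms μ X p g) (hY0pos : ∀ a : G, 0 < μ {ω | Y ω = 0 ∧ g (X ω) = a})
    {d : 𝒳 → ℝ} (hd : Measurable d) (hd01 : ∀ x, d x ∈ Icc (0:ℝ) 1) :
    ∃ t : G → ℝ, (∀ a, t a ∈ Icc (0:ℝ) 1) ∧
      ∀ a, groupFPR μ X Y g (thresholdRule p g t) a = groupFPR μ X Y g d a := by
  have hIVT : ∀ a, ∃ s ∈ Icc (0:ℝ) 1,
      groupFPR μ X Y g (thresholdRule p g fun _ => s) a = groupFPR μ X Y g d a := by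
    intro a
    have hcont : Continuous fun s : ℝ => groupFPR μ X Y g (thresholdRule p g fun _ => s) a :=
      (continuous_groupFPR_thresholdRule hX hp hg hatom a).comp
        (continuous_pi fun _ => continuous_id)
    refine intermediate_value_Icc' zero_le_one hcont.continuousOn ?_
    rw [groupFPR_thresholdRule_one hp01 hatom, groupFPR_thresholdRule_zero hp01 hY0pos]
    exact groupFPR_mem_Icc hX hd hd01 a
  choose t ht01 ht using hIVT
  exact ⟨t, ht01, fun a => (groupFPR_thresholdRule_eq_const hX hY hg t a).trans (ht a)⟩

lemma isCompact_equalFPRThresholds [Countable G] [IsFiniteMeasure μ] (hX : Measurable X)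
    (hp : Measurable p) (hg : Measurable g) (hatom : NoGroupAtoms μ X p g) :
    IsCompact (equalFPRThresholds μ X Y p g) := by
  refine (isCompact_univ_pi fun _ : G => isCompact_Icc (a := (0:ℝ)) (b := 1)).of_isClosed_subset
    ?_ fun t ht a _ => ht.1 a
  have hcont := continuous_groupFPR_thresholdRule (Y := Y) hX hp hg hatom
  simp only [equalFPRThresholds, ofPred_and, ofPred_forall]
  exact (isClosed_iInter fun a => isClosed_Icc.preimage (continuous_apply a)).inter
    (isClosed_iInter fun a => isClosed_iInter fun b => isClosed_eq (hcont a) (hcont b))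

lemma continuous_utility_thresholdRule [Countable G] [IsFiniteMeasure μ] (hX : Measurable X)
    (hp : Measurable p) (hp01 : ∀ x, p x ∈ Icc (0:ℝ) 1) (hrisk : IsRiskScore μ X Y p)
    (hg : Measurable g) (hatom : NoGroupAtoms μ X p g) (c : ℝ) :
    Continuous fun t => utility μ X Y c (thresholdRule p g t) := by
  have heq : (fun t => utility μ X Y c (thresholdRule p g t))
      = fun t => ∫ ω, (p (X ω) - c) * thresholdRule p g t (X ω) ∂μ := funext fun t =>
    utility_eq_integral hX hp hp01 hrisk (measurable_thresholdRule hp hg t)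
      (thresholdRule_mem_Icc t) c
  rw [heq]
  exact continuous_integral_mul_ite_le
    ((integrable_comp_of_mem_Icc hX hp hp01).sub (integrable_const c)) (hp.fun_comp hX)
    (hg.fun_comp hX) hatom

lemma exists_isMaxOn_utility_thresholdRule [Countable G] [IsFiniteMeasure μ]
    (hX : Measurable X) (hp : Measurable p) (hp01 : ∀ x, p x ∈ Icc (0:ℝ) 1)
    (hrisk : IsRiskScore μ X Y p) (hg : Measurable g) (hatom : NoGroupAtoms μ X p g)
    (hY0pos : ∀ a : G, 0 < μ {ω | Y ω = 0 ∧ g (X ω) = a}) (c : ℝ) :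
    ∃ T ∈ equalFPRThresholds μ X Y p g, IsMaxOn (fun t => utility μ X Y c (thresholdRule p g t))
      (equalFPRThresholds μ X Y p g) T := by
  refine (isCompact_equalFPRThresholds hX hp hg hatom).exists_isMaxOn ?_
    (continuous_utility_thresholdRule hX hp hp01 hrisk hg hatom c).continuousOn
  refine ⟨fun _ => 0, fun _ => ⟨le_rfl, zero_le_one⟩, fun a b => ?_⟩
  rw [groupFPR_thresholdRule_zero hp01 hY0pos, groupFPR_thresholdRule_zero hp01 hY0pos]

lemma utility_le_utility_thresholdRule [Fintype G] [IsFiniteMeasure μ] (hX : Measurable X)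
    (hY : Measurable Y) (hY01 : ∀ ω, Y ω = 0 ∨ Y ω = 1) (hp : Measurable p)
    (hp01 : ∀ x, p x ∈ Icc (0:ℝ) 1) (hrisk : IsRiskScore μ X Y p) (hg : Measurable g)
    (hY0pos : ∀ a : G, 0 < μ {ω | Y ω = 0 ∧ g (X ω) = a}) {c : ℝ} (hc : c < 1) {d : 𝒳 → ℝ}
    (hd : Measurable d) (hd01 : ∀ x, d x ∈ Icc (0:ℝ) 1) {t : G → ℝ} (ht : ∀ a, t a ≤ 1)
    (hfpr : ∀ a, groupFPR μ X Y g d a = groupFPR μ X Y g (thresholdRule p g t) a) :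
    utility μ X Y c d ≤ utility μ X Y c (thresholdRule p g t) := by
  have hD := measurable_thresholdRule hp hg t
  have hD01 : ∀ x, thresholdRule p g t x ∈ Icc (0:ℝ) 1 := thresholdRule_mem_Icc t
  have hpc : Integrable (fun ω => p (X ω) - c) μ :=
    (integrable_comp_of_mem_Icc hX hp hp01).sub (integrable_const c)
  rw [utility_eq_integral hX hp hp01 hrisk hd hd01, utility_eq_integral hX hp hp01 hrisk hD hD01,
    integral_eq_sum_setIntegral_fiber (k := fun ω => g (X ω)) (hg.fun_comp hX)
      (hpc.mul_of_mem_Icc (hd.fun_comp hX) fun ω => hd01 _),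
    integral_eq_sum_setIntegral_fiber (k := fun ω => g (X ω)) (hg.fun_comp hX)
      (hpc.mul_of_mem_Icc (hD.fun_comp hX) fun ω => hD01 _)]
  refine Finset.sum_le_sum fun a _ => ?_
  have hconst : ∀ f : Ω → ℝ, ∫ ω in {ω | g (X ω) = a}, f ω * thresholdRule p g t (X ω) ∂μ
      = ∫ ω in {ω | g (X ω) = a}, f ω * thresholdRule p g (fun _ => t a) (X ω) ∂μ := fun f =>
    setIntegral_congr_fun (measurableSet_group hX hg a) fun ω hω => by
      rw [thresholdRule_of_eq (t := t) hω]
  have hfp : ∫ ω in {ω | g (X ω) = a}, (1 - p (X ω)) * d (X ω) ∂μ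
      = ∫ ω in {ω | g (X ω) = a}, (1 - p (X ω)) * thresholdRule p g (fun _ => t a) (X ω) ∂μ := by
    rw [← hconst, ← setIntegral_negative_group hX hY hY01 hp hp01 hrisk hg hd hd01,
      ← setIntegral_negative_group hX hY hY01 hp hp01 hrisk hg hD hD01]
    exact (div_left_inj' (ENNReal.toReal_ne_zero.2 ⟨(hY0pos a).ne', measure_ne_top μ _⟩)).1
      (hfpr a)
  rw [hconst]
  exact integral_mul_le_integral_mul_ite_le (hp.fun_comp hX) (hd.fun_comp hX)
    (fun ω => hp01 _) (fun ω => hd01 _) (ht a) hc hfp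

end Fairness

theorem stmt_7_general
    {Ω 𝒳 G : Type*} [MeasurableSpace Ω] [MeasurableSpace 𝒳]
    [Fintype G] [MeasurableSpace G] [MeasurableSingletonClass G]
    (μ : Measure Ω) [IsProbabilityMeasure μ]
    (X : Ω → 𝒳) (hX : Measurable X)
    (Y : Ω → ℝ) (hY : Measurable Y) (hY01 : ∀ ω, Y ω = 0 ∨ Y ω = 1)
    (p : 𝒳 → ℝ) (hp : Measurable p) (hp01 : ∀ x, p x ∈ Icc (0:ℝ) 1)
    (hrisk : ∀ f : 𝒳 → ℝ, Measurable f → (∃ C, ∀ x, |f x| ≤ C) →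
      ∫ ω, Y ω * f (X ω) ∂μ = ∫ ω, p (X ω) * f (X ω) ∂μ)
    (g : 𝒳 → G) (hg : Measurable g)
    (hdens : ∀ a : G,
      PosDensity01 (Measure.map (fun ω => p (X ω))
        (ProbabilityTheory.cond μ {ω | g (X ω) = a})))
    (hY0pos : ∀ a : G, 0 < μ {ω | Y ω = 0 ∧ g (X ω) = a})
    (c : ℝ) (hc1 : c < 1) :
    ∃ t : G → ℝ, (∀ a : G, t a ∈ Icc (0:ℝ) 1) ∧
      PredEq μ X Y g (fun x => if t (g x) ≤ p x then (1:ℝ) else 0) ∧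
      ∀ d : 𝒳 → ℝ, Measurable d → (∀ x, d x ∈ Icc (0:ℝ) 1) →
        PredEq μ X Y g d →
        (∫ ω, Y ω * d (X ω) ∂μ) - c * ∫ ω, d (X ω) ∂μ
          ≤ (∫ ω, Y ω * (if t (g (X ω)) ≤ p (X ω) then (1:ℝ) else 0) ∂μ)
              - c * ∫ ω, (if t (g (X ω)) ≤ p (X ω) then (1:ℝ) else 0) ∂μ := by
  have hatom := noGroupAtoms_of_posDensity01 hX hp hg hdens
  obtain ⟨T, ⟨hT01, hTfpr⟩, hTmax⟩ :=
    exists_isMaxOn_utility_thresholdRule hX hp hp01 hrisk hg hatom hY0pos c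
  refine ⟨T, hT01, predEq_of_groupFPR_eq hX hg hY0pos (measurable_thresholdRule hp hg T)
    (thresholdRule_mem_Icc T) hTfpr, fun d hd hd01 hPE => ?_⟩
  obtain ⟨t, ht01, ht⟩ := exists_thresholdRule_groupFPR_eq hX hY hp hp01 hg hatom hY0pos hd hd01
  have htK : t ∈ equalFPRThresholds μ X Y p g :=
    ⟨ht01, fun a b => (ht a).trans ((hPE a).trans ((hPE b).symm.trans (ht b).symm))⟩
  calc utility μ X Y c d ≤ utility μ X Y c (thresholdRule p g t) :=
        utility_le_utility_thresholdRule hX hY hY01 hp hp01 hrisk hg hY0pos hc1 hd hd01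
          (fun a => (ht01 a).2) fun a => (ht a).symm
    _ ≤ utility μ X Y c (thresholdRule p g T) := hTmax htK

/-- there exist group-specific thresholds `t_a ∈ [0,1]` such that the
threshold rule `d*(x) = 1{p(x) ≥ t_{g(x)}}` satisfies predictive equality and maximizes
the immediate utility `u(·,c)` among decision rules satisfying predictive equality. -/
theorem stmt_7
    {Ω 𝒳 G : Type*} [MeasurableSpace Ω] [MeasurableSpace 𝒳]
    [Fintype G] [MeasurableSpace G] [MeasurableSingletonClass G]
    (μ : Measure Ω) [IsProbabilityMeasure μ]
    (X : Ω → 𝒳) (hX : Measurable X)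
    (Y : Ω → ℝ) (hY : Measurable Y) (hY01 : ∀ ω, Y ω = 0 ∨ Y ω = 1)
    (p : 𝒳 → ℝ) (hp : Measurable p) (hp01 : ∀ x, p x ∈ Icc (0:ℝ) 1)
    (hrisk : ∀ f : 𝒳 → ℝ, Measurable f → (∃ C, ∀ x, |f x| ≤ C) →
      ∫ ω, Y ω * f (X ω) ∂μ = ∫ ω, p (X ω) * f (X ω) ∂μ)
    (g : 𝒳 → G) (hg : Measurable g)
    (hgpos : ∀ a : G, 0 < μ {ω | g (X ω) = a})
    (hdens : ∀ a : G,
      PosDensity01 (Measure.map (fun ω => p (X ω))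
        (ProbabilityTheory.cond μ {ω | g (X ω) = a})))
    (hY0pos : ∀ a : G, 0 < μ {ω | Y ω = 0 ∧ g (X ω) = a})
    (c : ℝ) (hc0 : 0 < c) (hc1 : c < 1) :
    ∃ t : G → ℝ, (∀ a : G, t a ∈ Icc (0:ℝ) 1) ∧
      PredEq μ X Y g (fun x => if t (g x) ≤ p x then (1:ℝ) else 0) ∧
      ∀ d : 𝒳 → ℝ, Measurable d → (∀ x, d x ∈ Icc (0:ℝ) 1) →
        PredEq μ X Y g d →
        (∫ ω, Y ω * d (X ω) ∂μ) - c * ∫ ω, d (X ω) ∂μ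
          ≤ (∫ ω, Y ω * (if t (g (X ω)) ≤ p (X ω) then (1:ℝ) else 0) ∂μ)
              - c * ∫ ω, (if t (g (X ω)) ≤ p (X ω) then (1:ℝ) else 0) ∂μ :=
  stmt_7_general μ X hX Y hY hY01 p hp hp01 hrisk g hg hdens hY0pos c hc1
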